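/- arXiv:math/0604487 — 2 statements merged into one kernel-verified Lean document; each statement's English description precedes it below -/
import Mathlib

section
/- Every continuous curve in ℂ (the image of a continuous map from [0,1] with more than one point) is a locally connected continuum. -/
/-!
The image of `[0, 1]` under `γ` is compact and connected, and by uniform continuity the images
`γ '' ([0, 1] ∩ closedBall s η)` of short parameter intervals are small subcontinua. By
compactness of `[0, 1]²`, nearby points `γ s`, `γ t` have parameters close to a pair `s', t'`
with `γ s' = γ t'`, so they are joined by the union of the two small pieces around `s'` and `t'`.
Such a piece may be a single point; a nontrivial one through `x` is centred at a point of the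
fibre `γ⁻¹ {x}` lying in the closure of its complement, which exists since `[0, 1]` is connected.
-/

open Set Metric

theorem IsPreconnected.exists_mem_inter_closure_diff {X : Type*} [TopologicalSpace X]
    {S Z : Set X} (hS : IsPreconnected S) (hZ : IsClosed Z) (hSZ : (S ∩ Z).Nonempty)
    (hSZc : (S \ Z).Nonempty) : ∃ r ∈ S ∩ Z, r ∈ closure (S \ Z) := by
  obtain ⟨r, hrS, hrZ, hrcl⟩ := isPreconnected_closed_iff.mp hS Z (closure (S \ Z)) hZ
    isClosed_closure (fun x hx => (em (x ∈ Z)).imp id fun h => subset_closure ⟨hx, h⟩) hSZ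
    (hSZc.mono fun x hx => ⟨hx.1, subset_closure hx⟩)
  exact ⟨r, ⟨hrS, hrZ⟩, hrcl⟩

section

variable {X Y : Type*} [PseudoMetricSpace X] {K : Set X} {f : X → Y}

theorem IsCompact.exists_pos_forall_diam_image_inter_closedBall_le [PseudoMetricSpace Y]
    (hK : IsCompact K) (hf : ContinuousOn f K) {ε : ℝ} (hε : 0 < ε) :
    ∃ η > 0, ∀ s, diam (f '' (K ∩ closedBall s η)) ≤ ε := by
  obtain ⟨δ, hδ, hfδ⟩ :=
    Metric.uniformContinuousOn_iff.mp (hK.uniformContinuousOn_of_continuous hf) ε hε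
  refine ⟨δ / 3, by positivity, fun s => diam_le_of_forall_dist_le hε.le ?_⟩
  rintro _ ⟨u, ⟨huK, hus⟩, rfl⟩ _ ⟨v, ⟨hvK, hvs⟩, rfl⟩
  have huv : dist u v < δ := calc
    dist u v ≤ dist u s + dist v s := dist_triangle_right u v s
    _ ≤ δ / 3 + δ / 3 := add_le_add (mem_closedBall.mp hus) (mem_closedBall.mp hvs)
    _ < δ := by linarith
  exact (hfδ u huK v hvK huv).le

/-- `dist (f s) (f t)` is positive and continuous on the compact set of pairs at distance at
least `η` from the coincidence set, hence bounded below there. -/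
theorem IsCompact.exists_pos_near_coincidence_of_dist_lt [MetricSpace Y] (hK : IsCompact K)
    (hf : ContinuousOn f K) {η : ℝ} (hη : 0 < η) :
    ∃ δ > 0, ∀ s ∈ K, ∀ t ∈ K, dist (f s) (f t) < δ →
      ∃ s' ∈ K, ∃ t' ∈ K, f s' = f t' ∧ dist s s' < η ∧ dist t t' < η := by
  let F := {p ∈ K ×ˢ K | f p.1 = f p.2}
  have hfar : IsCompact (K ×ˢ K \ thickening η F) := (hK.prod hK).diff isOpen_thickening
  have hdist : ContinuousOn (fun p : X × X => dist (f p.1) (f p.2)) (K ×ˢ K \ thickening η F) :=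
    continuous_dist.comp_continuousOn <| (hf.comp continuousOn_fst fun p hp => hp.1.1).prodMk
      (hf.comp continuousOn_snd fun p hp => hp.1.2)
  have hpos : ∀ p ∈ K ×ˢ K \ thickening η F, 0 < dist (f p.1) (f p.2) := by
    refine fun p hp => dist_pos.mpr fun hp' => hp.2 ?_
    exact self_subset_thickening hη F ⟨hp.1, hp'⟩
  obtain ⟨δ, hδ, hδle⟩ := hfar.exists_forall_le' hdist hpos
  refine ⟨δ, hδ, fun s hs t ht hst => ?_⟩
  have hnear : (s, t) ∈ thickening η F := by
    by_contra h
    exact (hδle (s, t) ⟨⟨hs, ht⟩, h⟩).not_gt hst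
  obtain ⟨⟨s', t'⟩, ⟨⟨hs', ht'⟩, hst'⟩, hd⟩ := mem_thickening_iff.mp hnear
  rw [Prod.dist_eq, max_lt_iff] at hd
  exact ⟨s', hs', t', ht', hst', hd⟩

end

namespace ContinuousOn

variable {X : Type*} {γ : ℝ → X} {a b : ℝ}

theorem isCompact_image_Icc_inter_closedBall [TopologicalSpace X]
    (hγ : ContinuousOn γ (Icc a b)) (s η : ℝ) : IsCompact (γ '' (Icc a b ∩ closedBall s η)) :=
  (isCompact_Icc.inter_right isClosed_closedBall).image_of_continuousOn
    (hγ.mono inter_subset_left)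

theorem isConnected_image_Icc_inter_closedBall [TopologicalSpace X]
    (hγ : ContinuousOn γ (Icc a b)) {s η : ℝ} (hs : s ∈ Icc a b) (hη : 0 ≤ η) :
    IsConnected (γ '' (Icc a b ∩ closedBall s η)) := by
  have hconn : IsConnected (Icc a b ∩ closedBall s η) := by
    rw [Real.closedBall_eq_Icc]
    exact ⟨⟨s, hs, by constructor <;> linarith⟩,
      (ordConnected_Icc.inter ordConnected_Icc).isPreconnected⟩
  exact hconn.image γ (hγ.mono inter_subset_left)

theorem exists_continuum_joining_of_dist_lt [MetricSpace X] (hγ : ContinuousOn γ (Icc a b))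
    {ε : ℝ} (hε : 0 < ε) :
    ∃ δ > 0, ∀ x ∈ γ '' Icc a b, ∀ y ∈ γ '' Icc a b, dist x y < δ →
      ∃ B ⊆ γ '' Icc a b, x ∈ B ∧ y ∈ B ∧ IsCompact B ∧ IsConnected B ∧ diam B < ε := by
  obtain ⟨η, hη, hdiam⟩ :=
    isCompact_Icc.exists_pos_forall_diam_image_inter_closedBall_le hγ (by positivity : 0 < ε / 3)
  obtain ⟨δ, hδ, hnear⟩ := isCompact_Icc.exists_pos_near_coincidence_of_dist_lt hγ hη
  refine ⟨δ, hδ, ?_⟩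
  rintro _ ⟨s, hs, rfl⟩ _ ⟨t, ht, rfl⟩ hst
  obtain ⟨s', hs', t', ht', hst', hss', htt'⟩ := hnear s hs t ht hst
  have hshared : (γ '' (Icc a b ∩ closedBall s' η) ∩ γ '' (Icc a b ∩ closedBall t' η)).Nonempty :=
    ⟨γ s', mem_image_of_mem γ ⟨hs', mem_closedBall_self hη.le⟩,
      hst' ▸ mem_image_of_mem γ ⟨ht', mem_closedBall_self hη.le⟩⟩
  refine ⟨_ ∪ _, union_subset (image_mono inter_subset_left) (image_mono inter_subset_left),
    Or.inl (mem_image_of_mem γ ⟨hs, hss'.le⟩), Or.inr (mem_image_of_mem γ ⟨ht, htt'.le⟩),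
    (hγ.isCompact_image_Icc_inter_closedBall s' η).union
      (hγ.isCompact_image_Icc_inter_closedBall t' η),
    IsConnected.union hshared (hγ.isConnected_image_Icc_inter_closedBall hs' hη.le)
      (hγ.isConnected_image_Icc_inter_closedBall ht' hη.le), ?_⟩
  exact (diam_union' hshared).trans_lt (by linarith [hdiam s', hdiam t'])

theorem exists_nontrivial_continuum_through [MetricSpace X] (hγ : ContinuousOn γ (Icc a b))
    (hnt : (γ '' Icc a b).Nontrivial) {x : X} (hx : x ∈ γ '' Icc a b) {ε : ℝ} (hε : 0 < ε) :
    ∃ C ⊆ γ '' Icc a b, x ∈ C ∧ IsCompact C ∧ IsConnected C ∧ C.Nontrivial ∧ diam C < ε := by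
  obtain ⟨η, hη, hdiam⟩ :=
    isCompact_Icc.exists_pos_forall_diam_image_inter_closedBall_le hγ (half_pos hε)
  have hfiber : IsClosed (Icc a b ∩ γ ⁻¹' {x}) :=
    hγ.preimage_isClosed_of_isClosed isClosed_Icc isClosed_singleton
  have hoff : (Icc a b \ (Icc a b ∩ γ ⁻¹' {x})).Nonempty := by
    obtain ⟨_, ⟨t, ht, rfl⟩, hne⟩ := hnt.exists_ne x
    exact ⟨t, ht, fun h => hne h.2⟩
  obtain ⟨s, hs, rfl⟩ := hx
  obtain ⟨r, ⟨hr, -, hγr⟩, hrcl⟩ :=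
    isPreconnected_Icc.exists_mem_inter_closure_diff hfiber ⟨s, hs, hs, rfl⟩ hoff
  obtain ⟨t, ⟨ht, hγt⟩, htr⟩ := Metric.mem_closure_iff.mp hrcl η hη
  have hr_mem : γ r ∈ γ '' (Icc a b ∩ closedBall r η) :=
    mem_image_of_mem γ ⟨hr, mem_closedBall_self hη.le⟩
  have ht_mem : γ t ∈ γ '' (Icc a b ∩ closedBall r η) :=
    mem_image_of_mem γ ⟨ht, mem_closedBall_comm.mp htr.le⟩
  refine ⟨γ '' (Icc a b ∩ closedBall r η), image_mono inter_subset_left, hγr ▸ hr_mem,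
    hγ.isCompact_image_Icc_inter_closedBall r η,
    hγ.isConnected_image_Icc_inter_closedBall hr hη.le,
    ⟨γ r, hr_mem, γ t, ht_mem, fun h => hγt ⟨ht, h.symm.trans hγr⟩⟩,
    (hdiam r).trans_lt (half_lt_self hε)⟩

end ContinuousOn

/-- Every continuous curve in `ℂ` (image of a continuous map on `[0,1]`, with more
than one point) is a locally connected continuum: it is compact and connected, and
for every `ε > 0` there is `δ > 0` such that any two of its points at distance
less than `δ` lie in a subcontinuum of diameter less than `ε`. -/
theorem curve_is_locally_connected_continuum (γ : ℝ → ℂ)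
    (hγ : ContinuousOn γ (Set.Icc 0 1)) (A : Set ℂ) (hA : A = γ '' Set.Icc 0 1)
    (hnt : A.Nontrivial) :
    IsCompact A ∧ IsConnected A ∧
    ∀ ε : ℝ, 0 < ε → ∃ δ : ℝ, 0 < δ ∧ ∀ a ∈ A, ∀ b ∈ A, dist a b < δ →
      ∃ B : Set ℂ, B ⊆ A ∧ a ∈ B ∧ b ∈ B ∧ IsCompact B ∧ IsConnected B ∧
        B.Nontrivial ∧ Metric.diam B < ε := by
  subst hA
  refine ⟨isCompact_Icc.image_of_continuousOn hγ, (isConnected_Icc zero_le_one).image γ hγ,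
    fun ε hε => ?_⟩
  obtain ⟨δ, hδ, hjoin⟩ := hγ.exists_continuum_joining_of_dist_lt (half_pos hε)
  refine ⟨δ, hδ, fun a ha b hb hab => ?_⟩
  obtain ⟨B, hBA, haB, hbB, hBc, hBconn, hBdiam⟩ := hjoin a ha b hb hab
  obtain ⟨C, hCA, haC, hCc, hCconn, hCnt, hCdiam⟩ :=
    hγ.exists_nontrivial_continuum_through hnt ha (half_pos hε)
  refine ⟨B ∪ C, union_subset hBA hCA, Or.inl haB, Or.inl hbB, hBc.union hCc,
    IsConnected.union ⟨a, haB, haC⟩ hBconn hCconn, hCnt.mono subset_union_right, ?_⟩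
  exact (diam_union' ⟨a, haB, haC⟩).trans_lt (by linarith)
end

section
/- Monotonicity of half-plane capacity: if K ⊆ K' are hulls in the upper half-plane, then the half-plane capacities satisfy a(K) ≤ a(K'). -/
/-!
Let `G` be the inverse of `g'`. Since `K ⊆ K'`, the map `f = g ∘ G` is a holomorphic self-map of
the upper half-plane, and `f (g' (iR)) = g (iR)` where both `g (iR)` and `g' (iR)` are `iR + o(1)`.
Letting `w = g' (iR)` with `R → ∞` in the Schwarz–Pick inequality for `f` (Julia's lemma) gives
`Im z ≤ Im f z`, that is `Im g' (iy) ≤ Im g (iy)`. As `y (y - Im g (iy)) → a(K)` and likewise for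
`K'`, this yields `a(K) ≤ a(K')`.
-/

/-- The open upper half-plane. -/
def UpperHalf : Set ℂ := {z | 0 < z.im}

open Complex ComplexConjugate Filter Function Metric Set Topology

section InverseFunction

variable {U : Set ℂ} {f : ℂ → ℂ} {z₀ : ℂ}

lemma not_eventually_eq_of_injOn (hU : U ∈ 𝓝 z₀) (hinj : InjOn f U) :
    ¬∀ᶠ z in 𝓝 z₀, f z = f z₀ := by
  intro h
  have hpunctured : ∀ᶠ z in 𝓝[≠] z₀, (f z = f z₀ ∧ z ∈ U) ∧ z ≠ z₀ :=
    ((h.and hU).filter_mono nhdsWithin_le_nhds).and self_mem_nhdsWithin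
  obtain ⟨z, ⟨hfz, hzU⟩, hne⟩ := hpunctured.exists
  exact hne (hinj hzU (mem_of_mem_nhds hU) hfz)

lemma image_mem_nhds_of_injOn (hf : AnalyticAt ℂ f z₀) (hU : U ∈ 𝓝 z₀) (hinj : InjOn f U)
    {N : Set ℂ} (hN : N ∈ 𝓝 z₀) : f '' N ∈ 𝓝 (f z₀) :=
  hf.eventually_constant_or_nhds_le_map_nhds.resolve_left (not_eventually_eq_of_injOn hU hinj)
    (image_mem_map hN)

lemma eventually_deriv_ne_zero_of_injOn (hf : AnalyticAt ℂ f z₀) (hU : U ∈ 𝓝 z₀)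
    (hinj : InjOn f U) : ∀ᶠ z in 𝓝[≠] z₀, deriv f z ≠ 0 := by
  refine hf.deriv.eventually_eq_zero_or_eventually_ne_zero.resolve_left fun h ↦
    not_eventually_eq_of_injOn hU hinj ?_
  obtain ⟨ε, hε, hball⟩ := Metric.mem_nhds_iff.mp (h.and hf.eventually_analyticAt)
  filter_upwards [ball_mem_nhds z₀ hε] with z hz
  exact isOpen_ball.is_const_of_deriv_eq_zero (convex_ball z₀ ε).isPreconnected
    (fun w hw ↦ (hball hw).2.differentiableAt.differentiableWithinAt) (fun w hw ↦ (hball hw).1)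
    hz (mem_ball_self hε)

lemma continuousAt_invFunOn_of_injOn (hf : AnalyticAt ℂ f z₀) (hU : U ∈ 𝓝 z₀)
    (hinj : InjOn f U) : ContinuousAt (invFunOn f U) (f z₀) := by
  rw [ContinuousAt, hinj.leftInvOn_invFunOn (mem_of_mem_nhds hU)]
  refine fun N hN ↦ mem_map.mpr <|
    mem_of_superset (image_mem_nhds_of_injOn hf hU hinj (inter_mem hN hU)) ?_
  rintro _ ⟨z, ⟨hzN, hzU⟩, rfl⟩
  simpa [hinj.leftInvOn_invFunOn hzU] using hzN

lemma differentiableAt_invFunOn_of_deriv_ne_zero (hf : AnalyticAt ℂ f z₀) (hU : U ∈ 𝓝 z₀)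
    (hinj : InjOn f U) (hd : deriv f z₀ ≠ 0) : DifferentiableAt ℂ (invFunOn f U) (f z₀) :=
  (hf.hasStrictDerivAt.to_local_left_inverse hd
    (eventually_of_mem hU fun _ hz ↦ hinj.leftInvOn_invFunOn hz)).hasDerivAt.differentiableAt

/-- Critical points of `f` are isolated, so the inverse is differentiable on a punctured
neighbourhood of each point and continuous there; the singularity is removable. -/
lemma differentiableOn_invFunOn_of_injOn (hU : IsOpen U) (hf : DifferentiableOn ℂ f U)
    (hinj : InjOn f U) : DifferentiableOn ℂ (invFunOn f U) (f '' U) := by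
  rintro _ ⟨z₀, hz₀, rfl⟩
  have hA := hf.analyticAt (hU.mem_nhds hz₀)
  have hregular : ∀ᶠ z in 𝓝 z₀, z ∈ U ∧ (z ≠ z₀ → deriv f z ≠ 0) :=
    (hU.eventually_mem hz₀).and
      (eventually_nhdsWithin_iff.mp (eventually_deriv_ne_zero_of_injOn hA (hU.mem_nhds hz₀) hinj))
  have hcont := continuousAt_invFunOn_of_injOn hA (hU.mem_nhds hz₀) hinj
  rw [ContinuousAt, hinj.leftInvOn_invFunOn hz₀] at hcont
  have hpunctured : ∀ᶠ w in 𝓝[≠] f z₀, DifferentiableAt ℂ (invFunOn f U) w := by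
    filter_upwards [nhdsWithin_le_nhds (hcont.eventually hregular),
      nhdsWithin_le_nhds (image_mem_nhds_of_injOn hA (hU.mem_nhds hz₀) hinj (hU.mem_nhds hz₀)),
      self_mem_nhdsWithin] with w hw hwU hne
    obtain ⟨z, hz, rfl⟩ := hwU
    rw [hinj.leftInvOn_invFunOn hz] at hw
    exact differentiableAt_invFunOn_of_deriv_ne_zero (hf.analyticAt (hU.mem_nhds hz))
      (hU.mem_nhds hz) hinj (hw.2 (by rintro rfl; exact hne rfl))
  have hs := eventually_nhdsWithin_iff.mp hpunctured
  refine (((differentiableOn_compl_singleton_and_continuousAt_iff hs).mp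
    ⟨fun w hw ↦ (hw.1 hw.2).differentiableWithinAt, ?_⟩).differentiableAt hs).differentiableWithinAt
  rw [ContinuousAt, hinj.leftInvOn_invFunOn hz₀]
  exact hcont

end InverseFunction

section SchwarzPick

noncomputable def cayley (w z : ℂ) : ℂ := (z - w) / (z - conj w)

noncomputable def cayleyInv (w ζ : ℂ) : ℂ := (w - conj w * ζ) / (1 - ζ)

variable {w z ζ : ℂ}

lemma norm_sub_lt_norm_sub_conj (hz : z ∈ UpperHalf) (hw : w ∈ UpperHalf) :
    ‖z - w‖ < ‖z - conj w‖ := by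
  have hz' : 0 < z.im := hz
  have hw' : 0 < w.im := hw
  refine lt_of_pow_lt_pow_left₀ 2 (norm_nonneg _) ?_
  simp only [Complex.sq_norm, normSq_apply, sub_re, sub_im, conj_re, conj_im]
  nlinarith

lemma sub_conj_ne_zero (hz : z ∈ UpperHalf) (hw : w ∈ UpperHalf) : z - conj w ≠ 0 :=
  norm_pos_iff.mp ((norm_nonneg _).trans_lt (norm_sub_lt_norm_sub_conj hz hw))

lemma cayley_mem_ball (hw : w ∈ UpperHalf) (hz : z ∈ UpperHalf) : cayley w z ∈ ball 0 1 := by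
  rw [mem_ball_zero_iff, cayley, norm_div, div_lt_one (norm_pos_iff.mpr (sub_conj_ne_zero hz hw))]
  exact norm_sub_lt_norm_sub_conj hz hw

lemma cayleyInv_mem_upperHalf (hw : w ∈ UpperHalf) (hζ : ζ ∈ ball 0 1) :
    cayleyInv w ζ ∈ UpperHalf := by
  have hw' : 0 < w.im := hw
  have hζ' : normSq ζ < 1 := by
    rw [← Complex.sq_norm]; exact pow_lt_one₀ (norm_nonneg _) (mem_ball_zero_iff.mp hζ) two_ne_zero
  have hden : 0 < normSq (1 - ζ) := normSq_pos.mpr fun h ↦ by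
    simp [show ζ = 1 by linear_combination -h] at hζ'
  have him : (cayleyInv w ζ).im = w.im * (1 - normSq ζ) / normSq (1 - ζ) := by
    simp only [cayleyInv, div_im, sub_re, sub_im, mul_re, mul_im, conj_re, conj_im, one_re,
      one_im, normSq_apply]
    ring
  change 0 < (cayleyInv w ζ).im
  rw [him]
  have : 0 < 1 - normSq ζ := by linarith
  positivity

lemma cayleyInv_cayley (hw : w ∈ UpperHalf) (hz : z ∈ UpperHalf) :
    cayleyInv w (cayley w z) = z := by
  have hne := sub_conj_ne_zero hz hw
  have hne' : z - conj w - (z - w) ≠ 0 := by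
    rw [sub_sub_sub_cancel_left]; exact sub_conj_ne_zero hw hw
  rw [cayleyInv, cayley, div_eq_iff (by rw [one_sub_div hne]; exact div_ne_zero hne' hne)]
  field_simp
  ring

lemma differentiableOn_cayley (hw : w ∈ UpperHalf) : DifferentiableOn ℂ (cayley w) UpperHalf :=
  fun _ hz ↦ ((differentiableAt_id.sub_const w).div (differentiableAt_id.sub_const _)
    (sub_conj_ne_zero hz hw)).differentiableWithinAt

lemma differentiableOn_cayleyInv (w : ℂ) : DifferentiableOn ℂ (cayleyInv w) (ball 0 1) :=
  fun ζ hζ ↦ ((differentiableAt_const w).sub (differentiableAt_id.const_mul _)).div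
    ((differentiableAt_const 1).sub differentiableAt_id) (sub_ne_zero.mpr fun h ↦ by
      simp [← h] at hζ) |>.differentiableWithinAt

lemma norm_cayley_le_of_mapsTo {f : ℂ → ℂ} (hd : DifferentiableOn ℂ f UpperHalf)
    (hm : MapsTo f UpperHalf UpperHalf) (hw : w ∈ UpperHalf) (hz : z ∈ UpperHalf) :
    ‖cayley (f w) (f z)‖ ≤ ‖cayley w z‖ := by
  have hψ : MapsTo (cayleyInv w) (ball 0 1) UpperHalf := fun _ hζ ↦ cayleyInv_mem_upperHalf hw hζ
  have hd' : DifferentiableOn ℂ (cayley (f w) ∘ f ∘ cayleyInv w) (ball 0 1) :=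
    (differentiableOn_cayley (hm hw)).comp (hd.comp (differentiableOn_cayleyInv w) hψ)
      (hm.comp hψ)
  have hm' : MapsTo (cayley (f w) ∘ f ∘ cayleyInv w) (ball 0 1) (closedBall 0 1) :=
    fun _ hζ ↦ ball_subset_closedBall (cayley_mem_ball (hm hw) (hm (hψ hζ)))
  simpa [cayleyInv_cayley hw hz] using norm_le_norm_of_mapsTo_ball hd' hm'
    (by simp [cayley, cayleyInv]) (mem_ball_zero_iff.mp (cayley_mem_ball hw hz))

end SchwarzPick

section Asymptotics

lemma tendsto_sqrt_sq_add_sub_atTop (y : ℝ) :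
    Tendsto (fun t : ℝ ↦ √(t ^ 2 + y ^ 2) - t) atTop (𝓝 0) := by
  have hupper : ∀ᶠ t : ℝ in atTop, √(t ^ 2 + y ^ 2) - t ≤ y ^ 2 / t := by
    filter_upwards [eventually_gt_atTop 0] with t ht
    have : √(t ^ 2 + y ^ 2) ≤ t + y ^ 2 / t := by
      refine Real.sqrt_le_iff.mpr ⟨by positivity, ?_⟩
      have : t * (y ^ 2 / t) = y ^ 2 := by field_simp
      nlinarith [sq_nonneg (y ^ 2 / t)]
    linarith
  have hlower : ∀ᶠ t : ℝ in atTop, 0 ≤ √(t ^ 2 + y ^ 2) - t := by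
    filter_upwards [eventually_ge_atTop 0] with t ht
    have := Real.sqrt_le_sqrt (le_add_of_nonneg_right (sq_nonneg y) : t ^ 2 ≤ t ^ 2 + y ^ 2)
    rw [Real.sqrt_sq ht] at this
    linarith
  exact tendsto_of_tendsto_of_tendsto_of_le_of_le' tendsto_const_nhds
    (tendsto_const_nhds.div_atTop tendsto_id) hlower hupper

lemma tendsto_norm_sub_I_mul_sub (c : ℂ) :
    Tendsto (fun R : ℝ ↦ ‖c - I * R‖ - R) atTop (𝓝 (-c.im)) := by
  have hnorm (R : ℝ) : ‖c - I * R‖ = √((R - c.im) ^ 2 + c.re ^ 2) := by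
    rw [norm_def, normSq_apply]
    congr 1
    simp only [sub_re, sub_im, mul_re, mul_im, I_re, I_im, ofReal_re, ofReal_im]
    ring
  have := ((tendsto_sqrt_sq_add_sub_atTop c.re).comp
    (tendsto_atTop_add_const_right atTop (-c.im) tendsto_id)).add_const (-c.im)
  simp only [zero_add] at this
  refine this.congr fun R ↦ ?_
  simp only [comp_apply, id, hnorm, ← sub_eq_add_neg]
  ring

variable {v : ℝ → ℂ}

lemma tendsto_norm_sub_sub (c : ℂ) (hv : Tendsto (fun R ↦ v R - I * R) atTop (𝓝 0)) :
    Tendsto (fun R : ℝ ↦ ‖c - v R‖ - R) atTop (𝓝 (-c.im)) := by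
  have hclose : Tendsto (fun R : ℝ ↦ ‖c - v R‖ - ‖c - I * R‖) atTop (𝓝 0) := by
    refine squeeze_zero_norm (fun R ↦ ?_) (by simpa using hv.norm)
    calc ‖‖c - v R‖ - ‖c - I * R‖‖ ≤ ‖(c - v R) - (c - I * R)‖ := abs_norm_sub_norm_le _ _
      _ = ‖v R - I * R‖ := by rw [← norm_neg]; ring_nf
  simpa using hclose.add (tendsto_norm_sub_I_mul_sub c)

lemma tendsto_norm_sub_conj_sub (c : ℂ) (hv : Tendsto (fun R ↦ v R - I * R) atTop (𝓝 0)) :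
    Tendsto (fun R : ℝ ↦ ‖c - conj (v R)‖ - R) atTop (𝓝 c.im) := by
  simpa [← norm_conj (c - conj _)] using tendsto_norm_sub_sub (conj c) hv

lemma add_le_add_of_mul_le_mul_of_tendsto_sub {p₁ p₂ p₃ p₄ : ℝ → ℝ} {c₁ c₂ c₃ c₄ : ℝ}
    (h₁ : Tendsto (fun R ↦ p₁ R - R) atTop (𝓝 c₁)) (h₂ : Tendsto (fun R ↦ p₂ R - R) atTop (𝓝 c₂))
    (h₃ : Tendsto (fun R ↦ p₃ R - R) atTop (𝓝 c₃)) (h₄ : Tendsto (fun R ↦ p₄ R - R) atTop (𝓝 c₄))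
    (h : ∀ᶠ R in atTop, p₁ R * p₂ R ≤ p₃ R * p₄ R) : c₁ + c₂ ≤ c₃ + c₄ := by
  -- `p p' / R - R = (p - R) + (p' - R) + (p - R) (p' - R) / R`
  have key {p p' : ℝ → ℝ} {c c' : ℝ} (hp : Tendsto (fun R ↦ p R - R) atTop (𝓝 c))
      (hp' : Tendsto (fun R ↦ p' R - R) atTop (𝓝 c')) :
      Tendsto (fun R ↦ p R * p' R / R - R) atTop (𝓝 (c + c')) := by
    have := (hp.add hp').add ((hp.mul hp').div_atTop tendsto_id)
    rw [add_zero] at this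
    refine this.congr' ?_
    filter_upwards [eventually_ne_atTop 0] with R hR
    simp only [id]
    field_simp
    ring
  refine le_of_tendsto_of_tendsto (key h₁ h₂) (key h₃ h₄) ?_
  filter_upwards [h, eventually_gt_atTop 0] with R hR hpos
  gcongr

end Asymptotics

lemma im_le_im_of_tendsto_sub_I_mul {f : ℂ → ℂ} (hd : DifferentiableOn ℂ f UpperHalf)
    (hm : MapsTo f UpperHalf UpperHalf) {u v : ℝ → ℂ} (hu : ∀ᶠ R in atTop, u R ∈ UpperHalf)
    (hfu : ∀ᶠ R in atTop, f (u R) = v R) (hu' : Tendsto (fun R ↦ u R - I * R) atTop (𝓝 0))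
    (hv' : Tendsto (fun R ↦ v R - I * R) atTop (𝓝 0)) {z : ℂ} (hz : z ∈ UpperHalf) :
    z.im ≤ (f z).im := by
  have hpick : ∀ᶠ R in atTop,
      ‖f z - v R‖ * ‖z - conj (u R)‖ ≤ ‖z - u R‖ * ‖f z - conj (v R)‖ := by
    filter_upwards [hu, hfu] with R hR hfR
    have := norm_cayley_le_of_mapsTo hd hm hR hz
    rwa [cayley, cayley, norm_div, norm_div, div_le_div_iff₀
      (norm_pos_iff.mpr (sub_conj_ne_zero (hm hz) (hm hR)))
      (norm_pos_iff.mpr (sub_conj_ne_zero hz hR)), hfR] at this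
  have := add_le_add_of_mul_le_mul_of_tendsto_sub (tendsto_norm_sub_sub (f z) hv')
    (tendsto_norm_sub_conj_sub z hu') (tendsto_norm_sub_sub z hu')
    (tendsto_norm_sub_conj_sub (f z) hv') hpick
  linarith

section Expansion

variable {h : ℝ → ℂ} {a : ℂ}

lemma tendsto_sub_I_mul_of_tendsto
    (ha : Tendsto (fun y : ℝ ↦ I * y * (h y - I * y)) atTop (𝓝 a)) :
    Tendsto (fun y : ℝ ↦ h y - I * y) atTop (𝓝 0) := by
  have hinv : Tendsto (fun y : ℝ ↦ (I * y)⁻¹) atTop (𝓝 0) := by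
    refine tendsto_inv₀_cobounded.comp (tendsto_norm_atTop_iff_cobounded.mp ?_)
    simpa using (tendsto_abs_atTop_atTop : Tendsto (|·|) atTop atTop)
  simpa using (hinv.mul ha).congr' <| (eventually_ne_atTop 0).mono fun y hy ↦ by
    have : (y : ℂ) ≠ 0 := ofReal_ne_zero.mpr hy
    field_simp

lemma tendsto_mul_sub_im_of_tendsto
    (ha : Tendsto (fun y : ℝ ↦ I * y * (h y - I * y)) atTop (𝓝 a)) :
    Tendsto (fun y : ℝ ↦ y * (y - (h y).im)) atTop (𝓝 a.re) := by
  refine ((continuous_re.tendsto a).comp ha).congr fun y ↦ ?_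
  simp only [comp_apply, mul_re, mul_im, sub_re, sub_im, I_re, I_im, ofReal_re, ofReal_im]
  ring

end Expansion

lemma eventually_I_mul_mem_upperHalf_diff {K : Set ℂ} (hK : Bornology.IsBounded K) :
    ∀ᶠ y : ℝ in atTop, I * y ∈ UpperHalf \ K := by
  obtain ⟨r, hr⟩ := hK.subset_closedBall 0
  filter_upwards [eventually_gt_atTop (max r 0)] with y hy
  have hy0 : 0 < y := (le_max_right r 0).trans_lt hy
  refine ⟨by simpa [UpperHalf] using hy0, fun hyK ↦ ?_⟩
  have := mem_closedBall_zero_iff.mp (hr hyK)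
  simp only [norm_mul, norm_I, norm_real, Real.norm_eq_abs, abs_of_pos hy0, one_mul] at this
  linarith [le_max_left r 0]

lemma tendsto_I_mul_atTop {S : Set ℂ} (hS : ∀ᶠ y : ℝ in atTop, I * y ∈ S) :
    Tendsto (fun y : ℝ ↦ I * y) atTop (comap (‖·‖) atTop ⊓ 𝓟 S) :=
  tendsto_inf.mpr ⟨tendsto_comap_iff.mpr
    (by simpa [comp_def] using (tendsto_abs_atTop_atTop : Tendsto (|·|) atTop atTop)),
    tendsto_principal.mpr hS⟩

lemma isOpen_upperHalf : IsOpen UpperHalf :=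
  isOpen_lt continuous_const continuous_im

theorem half_plane_capacity_mono_general
    (K K' : Set ℂ) (hsub : K ⊆ K')
    (hK'b : Bornology.IsBounded K')
    (hK'cl : closure (K' ∩ UpperHalf) = K')
    (g g' : ℂ → ℂ)
    (hg : DifferentiableOn ℂ g (UpperHalf \ K))
    (hgb : Set.BijOn g (UpperHalf \ K) UpperHalf)
    (hg' : DifferentiableOn ℂ g' (UpperHalf \ K'))
    (hg'b : Set.BijOn g' (UpperHalf \ K') UpperHalf)
    (aK aK' : ℝ)
    (ha : Filter.Tendsto (fun z => z * (g z - z))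
      ((Filter.comap (fun z : ℂ => ‖z‖) Filter.atTop) ⊓
        Filter.principal (UpperHalf \ K)) (nhds (aK : ℂ)))
    (ha' : Filter.Tendsto (fun z => z * (g' z - z))
      ((Filter.comap (fun z : ℂ => ‖z‖) Filter.atTop) ⊓
        Filter.principal (UpperHalf \ K')) (nhds (aK' : ℂ))) :
    aK ≤ aK' := by
  have hdom : UpperHalf \ K' ⊆ UpperHalf \ K := sdiff_subset_sdiff_right hsub
  set G := invFunOn g' (UpperHalf \ K')
  have hGd : DifferentiableOn ℂ G UpperHalf := hg'b.image_eq ▸ differentiableOn_invFunOn_of_injOn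
    (isOpen_upperHalf.sdiff (hK'cl ▸ isClosed_closure)) hg' hg'b.injOn
  have hGm : MapsTo G UpperHalf (UpperHalf \ K) := hg'b.surjOn.mapsTo_invFunOn.mono_right hdom
  have hGg' : LeftInvOn G g' (UpperHalf \ K') := hg'b.injOn.leftInvOn_invFunOn
  have haxis := eventually_I_mul_mem_upperHalf_diff hK'b
  have hexp := ha.comp (tendsto_I_mul_atTop (haxis.mono fun _ hy ↦ hdom hy))
  have hexp' := ha'.comp (tendsto_I_mul_atTop haxis)
  have him : ∀ᶠ y : ℝ in atTop, (g' (I * y)).im ≤ (g (I * y)).im := by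
    filter_upwards [haxis] with y hy
    simpa [hGg' hy] using im_le_im_of_tendsto_sub_I_mul (f := g ∘ G)
      (hg.comp hGd hGm) (hgb.mapsTo.comp hGm)
      (haxis.mono fun _ hR ↦ hg'b.mapsTo hR) (haxis.mono fun _ hR ↦ by simp [hGg' hR])
      (tendsto_sub_I_mul_of_tendsto hexp') (tendsto_sub_I_mul_of_tendsto hexp) (hg'b.mapsTo hy)
  simpa using le_of_tendsto_of_tendsto (tendsto_mul_sub_im_of_tendsto hexp)
    (tendsto_mul_sub_im_of_tendsto hexp') <| by
      filter_upwards [him, eventually_ge_atTop 0] with y hy hy0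
      gcongr

/-- Monotonicity of half-plane capacity: if `K ⊆ K'` are hulls in the upper
half-plane, with hydrodynamically normalized conformal maps
`g : ℍ∖K → ℍ`, `g' : ℍ∖K' → ℍ` having expansions `z + a/z + o(1/z)` and
`z + a'/z + o(1/z)` at infinity, then `a ≤ a'`. -/
theorem half_plane_capacity_mono
    (K K' : Set ℂ) (hsub : K ⊆ K')
    (hKb : Bornology.IsBounded K) (hK'b : Bornology.IsBounded K')
    (hKh : K ⊆ {z : ℂ | 0 ≤ z.im}) (hK'h : K' ⊆ {z : ℂ | 0 ≤ z.im})
    (hKcl : closure (K ∩ UpperHalf) = K) (hK'cl : closure (K' ∩ UpperHalf) = K')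
    (hKs : SimplyConnectedSpace (UpperHalf \ K : Set ℂ))
    (hK's : SimplyConnectedSpace (UpperHalf \ K' : Set ℂ))
    (g g' : ℂ → ℂ)
    (hg : DifferentiableOn ℂ g (UpperHalf \ K))
    (hgb : Set.BijOn g (UpperHalf \ K) UpperHalf)
    (hg' : DifferentiableOn ℂ g' (UpperHalf \ K'))
    (hg'b : Set.BijOn g' (UpperHalf \ K') UpperHalf)
    (aK aK' : ℝ)
    (ha : Filter.Tendsto (fun z => z * (g z - z))
      ((Filter.comap (fun z : ℂ => ‖z‖) Filter.atTop) ⊓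
        Filter.principal (UpperHalf \ K)) (nhds (aK : ℂ)))
    (ha' : Filter.Tendsto (fun z => z * (g' z - z))
      ((Filter.comap (fun z : ℂ => ‖z‖) Filter.atTop) ⊓
        Filter.principal (UpperHalf \ K')) (nhds (aK' : ℂ))) :
    aK ≤ aK' :=
  half_plane_capacity_mono_general K K' hsub hK'b hK'cl g g' hg hgb hg' hg'b aK aK' ha ha'
end
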